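/- For all Milner expressions e, f, g₁, …, g_m, h₁, …, h_m and all distinct variables v_{i₁}, …, v_{i_m}, substitution is nonexpansive for the behavioural distance: bd(e[(g₁, …, g_m)/(v_{i₁}, …, v_{i_m})], f[(h₁, …, h_m)/(v_{i₁}, …, v_{i_m})]) ≤ max{ bd(e, f), max_{1≤j≤m} bd(g_j, h_j) }. -/

import Mathlib

open Classical in
/-- The lifting `d↑` of a distance function on `X` to `Σ × X + V`. -/
noncomputable def distLift {A V X : Type*} (d : X → X → ℝ) :
    ((A × X) ⊕ V) → ((A × X) ⊕ V) → ℝ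
  | Sum.inl (a, x), Sum.inl (b, y) => if a = b then (1 / 2) * d x y else 1
  | Sum.inr v, Sum.inr w => if v = w then 0 else 1
  | _, _ => 1

/-- Supremum of `f` over a finite set, with the convention `sup ∅ = 0`. -/
noncomputable def hSup {Y : Type*} (s : Finset Y) (f : Y → ℝ) : ℝ :=
  if h : s.Nonempty then s.sup' h f else 0

/-- Infimum of `f` over a finite set, with the convention `inf ∅ = 1`. -/
noncomputable def hInf {Y : Type*} (s : Finset Y) (f : Y → ℝ) : ℝ :=
  if h : s.Nonempty then s.inf' h f else 1

/-- Hausdorff lifting of a distance function to finite subsets. -/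
noncomputable def hausdorffDist {X : Type*} (d : X → X → ℝ) (s t : Finset X) : ℝ :=
  max (hSup s fun x => hInf t fun y => d x y) (hSup t fun y => hInf s fun x => d y x)

/-- The map `Φ_β` associated with a prechart `(Q, β)`. -/
noncomputable def Phi {A V Q : Type*} (β : Q → Finset ((A × Q) ⊕ V))
    (d : Q → Q → ℝ) : Q → Q → ℝ :=
  fun q₁ q₂ => hausdorffDist (distLift d) (β q₁) (β q₂)

/-- `d` is a 1-bounded pseudometric on `X`. -/
structure IsBPMet {X : Type*} (d : X → X → ℝ) : Prop where
  nonneg : ∀ x y, 0 ≤ d x y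
  le_one : ∀ x y, d x y ≤ 1
  refl : ∀ x, d x x = 0
  symm : ∀ x y, d x y = d y x
  triangle : ∀ x y z, d x z ≤ d x y + d y z

/-- A bisimulation between two precharts. -/
def IsBisim {A V Q₁ Q₂ : Type*} (β₁ : Q₁ → Finset ((A × Q₁) ⊕ V))
    (β₂ : Q₂ → Finset ((A × Q₂) ⊕ V)) (R : Q₁ → Q₂ → Prop) : Prop :=
  ∀ q₁ q₂, R q₁ q₂ →
    (∀ v : V, Sum.inr v ∈ β₁ q₁ ↔ Sum.inr v ∈ β₂ q₂) ∧
    (∀ (a : A) (q₁' : Q₁), Sum.inl (a, q₁') ∈ β₁ q₁ →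
      ∃ q₂', Sum.inl (a, q₂') ∈ β₂ q₂ ∧ R q₁' q₂') ∧
    (∀ (a : A) (q₂' : Q₂), Sum.inl (a, q₂') ∈ β₂ q₂ →
      ∃ q₁', Sum.inl (a, q₁') ∈ β₁ q₁ ∧ R q₁' q₂')

/-- Bisimilarity of two states of a prechart. -/
def Bisimilar {A V Q : Type*} (β : Q → Finset ((A × Q) ⊕ V)) (q₁ q₂ : Q) : Prop :=
  ∃ R, IsBisim β β R ∧ R q₁ q₂

/-- A prechart homomorphism: a function whose graph is a bisimulation. -/
def IsHom {A V Q₁ Q₂ : Type*} (β₁ : Q₁ → Finset ((A × Q₁) ⊕ V))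
    (β₂ : Q₂ → Finset ((A × Q₂) ⊕ V)) (f : Q₁ → Q₂) : Prop :=
  IsBisim β₁ β₂ fun q₁ q₂ => q₂ = f q₁

/-- Stratification of bisimilarity between two precharts. -/
def Strat2 {A V Q₁ Q₂ : Type*} (β₁ : Q₁ → Finset ((A × Q₁) ⊕ V))
    (β₂ : Q₂ → Finset ((A × Q₂) ⊕ V)) : ℕ → Q₁ → Q₂ → Prop
  | 0 => fun _ _ => True
  | n + 1 => fun q₁ q₂ =>
      (∀ v : V, Sum.inr v ∈ β₁ q₁ ↔ Sum.inr v ∈ β₂ q₂) ∧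
      (∀ (a : A) (q₁' : Q₁), Sum.inl (a, q₁') ∈ β₁ q₁ →
        ∃ q₂', Sum.inl (a, q₂') ∈ β₂ q₂ ∧ Strat2 β₁ β₂ n q₁' q₂') ∧
      (∀ (a : A) (q₂' : Q₂), Sum.inl (a, q₂') ∈ β₂ q₂ →
        ∃ q₁', Sum.inl (a, q₁') ∈ β₁ q₁ ∧ Strat2 β₁ β₂ n q₁' q₂')

/-- Stratification of bisimilarity on a single prechart. -/
def Strat {A V Q : Type*} (β : Q → Finset ((A × Q) ⊕ V)) : ℕ → Q → Q → Prop :=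
  Strat2 β β

/-- One-step transition relation of a prechart. -/
def StepRel {A V Q : Type*} (β : Q → Finset ((A × Q) ⊕ V)) (q q' : Q) : Prop :=
  ∃ a : A, Sum.inl (a, q') ∈ β q

/-- A prechart is locally finite if every state reaches only finitely many states. -/
def LocFinite {A V Q : Type*} (β : Q → Finset ((A × Q) ⊕ V)) : Prop :=
  ∀ q : Q, {q' | Relation.ReflTransGen (StepRel β) q q'}.Finite

/-- `bd` is the least fixpoint of `Φ_β` in the lattice of 1-bounded pseudometrics. -/
def IsLfpDist {A V Q : Type*} (β : Q → Finset ((A × Q) ⊕ V)) (bd : Q → Q → ℝ) : Prop :=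
  IsBPMet bd ∧ Phi β bd = bd ∧
    ∀ d : Q → Q → ℝ, IsBPMet d → Phi β d = d → ∀ x y, bd x y ≤ d x y

open Classical in
/-- The discrete pseudometric, the top element of `D_X`. -/
noncomputable def discreteDist {X : Type*} : X → X → ℝ :=
  fun x y => if x = y then 0 else 1

/-- Iterates `Φ_β^{(p)}` of `Φ_β` starting from the discrete pseudometric. -/
noncomputable def PhiIter {A V Q : Type*} (β : Q → Finset ((A × Q) ⊕ V)) :
    ℕ → Q → Q → ℝ
  | 0 => discreteDist
  | n + 1 => Phi β (PhiIter β n)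


/-- Milner expressions over an alphabet `A`, with variables drawn from `ℕ`
(a countably infinite set of variables). -/
inductive Exp (A : Type*) : Type _ where
  | zero : Exp A
  | var : ℕ → Exp A
  | act : A → Exp A → Exp A
  | plus : Exp A → Exp A → Exp A
  | mu : ℕ → Exp A → Exp A
deriving DecidableEq

namespace Exp

/-- Free variables of an expression. -/
def fv {A : Type*} : Exp A → Finset ℕ
  | .zero => ∅
  | .var v => {v}
  | .act _ e => fv e
  | .plus e f => fv e ∪ fv f
  | .mu v e => (fv e).erase v

/-- A fresh variable not belonging to the given finite set. -/
def freshVar (s : Finset ℕ) : ℕ := s.sup id + 1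

/-- Simultaneous capture-avoiding substitution: `subst σ e` substitutes `σ w` for every
free occurrence of each variable `w` in `e`, renaming the bound variable of a
`μ`-binder whenever it would capture a free variable of a substituted expression. -/
def subst {A : Type*} : (ℕ → Exp A) → Exp A → Exp A
  | _, .zero => .zero
  | σ, .var v => σ v
  | σ, .act a e => .act a (subst σ e)
  | σ, .plus e f => .plus (subst σ e) (subst σ f)
  | σ, .mu v e =>
      let S : Finset ℕ := ((fv e).erase v).biUnion fun w => fv (σ w)
      let v' : ℕ := if v ∈ S then freshVar S else v
      .mu v' (subst (Function.update σ v (.var v')) e)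

/-- Substitution of a single expression `t` for the variable `v`. -/
def subst1 {A : Type*} (e : Exp A) (v : ℕ) (t : Exp A) : Exp A :=
  subst (Function.update Exp.var v t) e
end Exp

section Dest
variable {A : Type*} [DecidableEq A]

/-- Successors contributed by one transition/output of the body of `μv.e`,
where `me = μv.e`. -/
def destStep (v : ℕ) (me : Exp A) : ((A × Exp A) ⊕ ℕ) → Finset ((A × Exp A) ⊕ ℕ)
  | Sum.inl (a, e') => {Sum.inl (a, Exp.subst1 e' v me)}
  | Sum.inr w => if w = v then ∅ else {Sum.inr w}

/-- The prechart structure on Milner expressions, given by the operational rules: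
`a.e →a e`; `v ▷ v`; `e + f` inherits the transitions and outputs of `e` and `f`;
`μw.e ▷ v` when `e ▷ v` and `v ≠ w`; `μv.e →a e'[μv.e/v]` whenever `e →a e'`. -/
def dest : Exp A → Finset ((A × Exp A) ⊕ ℕ)
  | .zero => ∅
  | .var v => {Sum.inr v}
  | .act a e => {Sum.inl (a, e)}
  | .plus e f => dest e ∪ dest f
  | .mu v e => (dest e).biUnion (destStep v (.mu v e))

end Dest



namespace BDProof

/-- de Bruijn / locally-nameless representation of Milner expressions. -/
inductive DB (A : Type*) : Type _ where
  | zero : DB A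
  | bvar : ℕ → DB A
  | fvar : ℕ → DB A
  | act : A → DB A → DB A
  | plus : DB A → DB A → DB A
  | mu : DB A → DB A

variable {A : Type*}

/-- shift dangling indices `≥ c` up by one. -/
def dbLift (c : ℕ) : DB A → DB A
  | .zero => .zero
  | .bvar i => if i < c then .bvar i else .bvar (i+1)
  | .fvar v => .fvar v
  | .act a t => .act a (dbLift c t)
  | .plus s t => .plus (dbLift c s) (dbLift c t)
  | .mu t => .mu (dbLift (c+1) t)

/-- substitute locally closed terms for free variables. -/
def substFV (F : ℕ → DB A) : DB A → DB A
  | .zero => .zero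
  | .bvar i => .bvar i
  | .fvar v => F v
  | .act a t => .act a (substFV F t)
  | .plus s t => .plus (substFV F s) (substFV F t)
  | .mu t => .mu (substFV F t)

/-- substitute `M` for the index `c`, shifting higher indices down. -/
def dbInst (c : ℕ) (M : DB A) : DB A → DB A
  | .zero => .zero
  | .bvar i => if i < c then .bvar i else if i = c then M else .bvar (i-1)
  | .fvar v => .fvar v
  | .act a t => .act a (dbInst c M t)
  | .plus s t => .plus (dbInst c M s) (dbInst c M t)
  | .mu t => .mu (dbInst (c+1) (dbLift 0 M) t)

/-- all dangling indices are `< c`. -/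
def LClosed (c : ℕ) : DB A → Prop
  | .zero => True
  | .bvar i => i < c
  | .fvar _ => True
  | .act _ t => LClosed c t
  | .plus s t => LClosed c s ∧ LClosed c t
  | .mu t => LClosed (c+1) t

/-- free variables of a de Bruijn term. -/
def dbfv : DB A → Finset ℕ
  | .zero => ∅
  | .bvar _ => ∅
  | .fvar v => {v}
  | .act _ t => dbfv t
  | .plus s t => dbfv s ∪ dbfv t
  | .mu t => dbfv t

theorem lclosed_mono {c c' : ℕ} (h : c ≤ c') : ∀ {t : DB A}, LClosed c t → LClosed c' t := by
  intro t; induction t generalizing c c' with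
  | zero => intro; trivial
  | bvar i => intro ht; exact lt_of_lt_of_le (ht : i < c) h
  | fvar v => intro; trivial
  | act a t ih => exact ih h
  | plus s t ihs iht => intro ht; exact ⟨ihs h ht.1, iht h ht.2⟩
  | mu t ih => exact ih (by omega)

theorem dbLift_lclosed {c l : ℕ} (h : c ≤ l) : ∀ {t : DB A}, LClosed c t → dbLift l t = t := by
  intro t; induction t generalizing c l with
  | zero => intro; rfl
  | bvar i => intro ht; have hi : i < c := ht; simp only [dbLift]; rw [if_pos (by omega)]
  | fvar v => intro; rfl
  | act a t ih => intro ht; simp only [dbLift]; rw [ih h ht]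
  | plus s t ihs iht => intro ht; simp only [dbLift]; rw [ihs h ht.1, iht h ht.2]
  | mu t ih => intro ht; simp only [dbLift]; rw [ih (by omega : c+1 ≤ l+1) ht]

theorem dbLift_dbLift {l c : ℕ} (h : l ≤ c) : ∀ (t : DB A),
    dbLift l (dbLift c t) = dbLift (c+1) (dbLift l t) := by
  intro t; induction t generalizing l c with
  | zero => rfl
  | bvar i =>
      simp only [dbLift]
      split_ifs <;> simp only [dbLift] <;> split_ifs <;>
        first | rfl | omega | (congr 1; omega)
  | fvar v => rfl
  | act a t ih => simp only [dbLift]; rw [ih h]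
  | plus s t ihs iht => simp only [dbLift]; rw [ihs h, iht h]
  | mu t ih => simp only [dbLift]; rw [ih (by omega)]

theorem dbLift_dbInst {l c : ℕ} (h : l ≤ c) (M : DB A) : ∀ (t : DB A),
    dbLift l (dbInst c M t) = dbInst (c+1) (dbLift l M) (dbLift l t) := by
  intro t; induction t generalizing l c M with
  | zero => rfl
  | bvar i =>
      simp only [dbInst, dbLift]
      split_ifs <;> simp only [dbInst, dbLift] <;> split_ifs <;>
        first | rfl | omega | (congr 1; omega)
        | fvar v => rfl
  | act a t ih => simp only [dbInst, dbLift]; rw [ih h]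
  | plus s t ihs iht => simp only [dbInst, dbLift]; rw [ihs h, iht h]
  | mu t ih =>
      simp only [dbInst, dbLift]
      rw [ih (by omega), dbLift_dbLift (Nat.zero_le l)]

theorem dbLift_substFV {l : ℕ} {F : ℕ → DB A} (hF : ∀ u, LClosed 0 (F u)) : ∀ (t : DB A),
    dbLift l (substFV F t) = substFV F (dbLift l t) := by
  intro t; induction t generalizing l with
  | zero => rfl
  | bvar i =>
      simp only [substFV, dbLift]
      split <;> rfl
  | fvar v => simp only [substFV, dbLift]; exact dbLift_lclosed (Nat.zero_le l) (hF v)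
  | act a t ih => simp only [substFV, dbLift]; rw [ih]
  | plus s t ihs iht => simp only [substFV, dbLift]; rw [ihs, iht]
  | mu t ih => simp only [substFV, dbLift]; rw [ih]

theorem substFV_substFV (F G : ℕ → DB A) : ∀ (t : DB A),
    substFV F (substFV G t) = substFV (fun w => substFV F (G w)) t := by
  intro t; induction t with
  | zero => rfl
  | bvar i => rfl
  | fvar v => rfl
  | act a t ih => simp only [substFV]; rw [ih]
  | plus s t ihs iht => simp only [substFV]; rw [ihs, iht]
  | mu t ih => simp only [substFV]; rw [ih]

theorem substFV_congr {F G : ℕ → DB A} : ∀ {t : DB A},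
    (∀ w ∈ dbfv t, F w = G w) → substFV F t = substFV G t := by
  intro t; induction t with
  | zero => intro; rfl
  | bvar i => intro; rfl
  | fvar v => intro h; exact h v (by simp [dbfv])
  | act a t ih => intro h; simp only [substFV]; rw [ih h]
  | plus s t ihs iht =>
      intro h; simp only [substFV]
      rw [ihs fun w hw => h w (by simp [dbfv, hw]), iht fun w hw => h w (by simp [dbfv, hw])]
  | mu t ih => intro h; simp only [substFV]; rw [ih h]



end BDProof

namespace BDProof
variable {A : Type*}

/-- index of a name in a context. -/
def idx : List ℕ → ℕ → Option ℕ
  | [], _ => none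
  | v :: Γ, w => if w = v then some 0 else (idx Γ w).map (· + 1)

def encode (A : Type*) (Γ : List ℕ) (w : ℕ) : DB A :=
  match idx Γ w with
  | some i => .bvar i
  | none => .fvar w

/-- translation of named terms to de Bruijn terms. -/
def toDB (Γ : List ℕ) : Exp A → DB A
  | .zero => .zero
  | .var v => encode A Γ v
  | .act a e => .act a (toDB Γ e)
  | .plus e f => .plus (toDB Γ e) (toDB Γ f)
  | .mu v e => .mu (toDB (v :: Γ) e)

theorem idx_lt_length : ∀ {Γ : List ℕ} {w i : ℕ}, idx Γ w = some i → i < Γ.length := by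
  intro Γ; induction Γ with
  | nil => intro w i h; simp [idx] at h
  | cons v Γ ih =>
      intro w i h
      simp only [idx] at h
      split_ifs at h with hv
      · simp only [Option.some.injEq] at h; subst h; simp
      · rcases Option.map_eq_some_iff.1 h with ⟨j, hj, rfl⟩
        have := ih hj; simp; omega

theorem idx_append {Γ₁ : List ℕ} (Γ₂ : List ℕ) {v w : ℕ} (h : v ∈ Γ₁ ∨ w ≠ v) :
    idx (Γ₁ ++ v :: Γ₂) w =
      match idx (Γ₁ ++ Γ₂) w with
      | some i => some (if i < Γ₁.length then i else i + 1)
      | none => none := by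
  induction Γ₁ with
  | nil =>
      have hw : w ≠ v := h.resolve_left (by simp)
      simp only [List.nil_append, idx, if_neg hw, List.length_nil]
      rcases hi : idx Γ₂ w with _ | i <;> simp
  | cons u Γ₁ ih =>
      simp only [List.cons_append, idx, List.append_eq]
      by_cases hwu : w = u
      · simp [hwu]
      · rw [if_neg hwu, if_neg hwu]
        have h' : v ∈ Γ₁ ∨ w ≠ v := by
          rcases h with h | h
          · rcases List.mem_cons.1 h with rfl | h
            · exact Or.inr hwu
            · exact Or.inl h
          · exact Or.inr h
        rcases hi : idx (Γ₁ ++ Γ₂) w with _ | i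
        · rw [ih h', hi]; simp
        · rw [ih h', hi]
          simp only [Option.map_some, List.length_cons]
          congr 1
          split_ifs <;> omega

theorem encode_append {Γ₁ : List ℕ} (Γ₂ : List ℕ) {v w : ℕ} (h : v ∈ Γ₁ ∨ w ≠ v) :
    encode A (Γ₁ ++ v :: Γ₂) w = dbLift Γ₁.length (encode A (Γ₁ ++ Γ₂) w) := by
  unfold encode
  rw [idx_append Γ₂ h]
  rcases hi : idx (Γ₁ ++ Γ₂) w with _ | i
  · rfl
  · by_cases hlt : i < Γ₁.length <;> simp [dbLift, hlt]

theorem encode_cons {Δ : List ℕ} {v w : ℕ} (h : w ≠ v) :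
    encode A (v :: Δ) w = dbLift 0 (encode A Δ w) := by
  have := encode_append (A := A) (Γ₁ := []) Δ (v := v) (w := w) (Or.inr h)
  simpa using this

theorem encode_self (Δ : List ℕ) (v : ℕ) : encode A (v :: Δ) v = .bvar 0 := by
  simp [encode, idx]

/-- translating with an extra context entry that is shadowed or not free. -/
theorem toDB_insert : ∀ (t : Exp A) (Γ₁ Γ₂ : List ℕ) (v : ℕ),
    (v ∈ Γ₁ ∨ v ∉ t.fv) →
    toDB (Γ₁ ++ v :: Γ₂) t = dbLift Γ₁.length (toDB (Γ₁ ++ Γ₂) t) := by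
  intro t
  induction t with
  | zero => intros; rfl
  | var w =>
      intro Γ₁ Γ₂ v h
      refine encode_append Γ₂ ?_
      rcases h with h | h
      · exact Or.inl h
      · refine Or.inr fun hw => h ?_
        subst hw; simp [Exp.fv]
  | act a e ih =>
      intro Γ₁ Γ₂ v h
      simp only [toDB, dbLift]
      rw [ih Γ₁ Γ₂ v (by simpa [Exp.fv] using h)]
  | plus e f ihe ihf =>
      intro Γ₁ Γ₂ v h
      have h' : v ∈ Γ₁ ∨ (v ∉ e.fv ∧ v ∉ f.fv) := by
        rcases h with h | h
        · exact Or.inl h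
        · exact Or.inr (by simpa [Exp.fv] using h)
      simp only [toDB, dbLift]
      rcases h' with h' | h'
      · rw [ihe Γ₁ Γ₂ v (Or.inl h'), ihf Γ₁ Γ₂ v (Or.inl h')]
      · rw [ihe Γ₁ Γ₂ v (Or.inr h'.1), ihf Γ₁ Γ₂ v (Or.inr h'.2)]
  | mu w e ih =>
      intro Γ₁ Γ₂ v h
      simp only [toDB, dbLift]
      rw [show w :: (Γ₁ ++ v :: Γ₂) = (w :: Γ₁) ++ v :: Γ₂ from rfl,
        show w :: (Γ₁ ++ Γ₂) = (w :: Γ₁) ++ Γ₂ from rfl,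
        ih (w :: Γ₁) Γ₂ v ?_]
      · rfl
      · rcases h with h | h
        · exact Or.inl (List.mem_cons_of_mem _ h)
        · by_cases hvw : v = w
          · exact Or.inl (hvw ▸ List.mem_cons_self)
          · refine Or.inr fun hv => h ?_
            simp only [Exp.fv, Finset.mem_erase]
            exact ⟨hvw, hv⟩

theorem lclosed_toDB : ∀ (t : Exp A) (Γ : List ℕ), LClosed Γ.length (toDB Γ t) := by
  intro t
  induction t with
  | zero => intro Γ; trivial
  | var w =>
      intro Γ
      simp only [toDB, encode]
      rcases hi : idx Γ w with _ | i
      · trivial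
      · exact idx_lt_length hi
  | act a e ih => intro Γ; exact ih Γ
  | plus e f ihe ihf => intro Γ; exact ⟨ihe Γ, ihf Γ⟩
  | mu w e ih => intro Γ; exact ih (w :: Γ)

theorem idx_eq_none_iff : ∀ {Γ : List ℕ} {w : ℕ}, idx Γ w = none ↔ w ∉ Γ := by
  intro Γ; induction Γ with
  | nil => intro w; simp [idx]
  | cons v Γ ih =>
      intro w
      by_cases h1 : w = v
      · subst h1; simp [idx]
      · simp [idx, h1, ih]

theorem mem_dbfv_toDB : ∀ (t : Exp A) (Γ : List ℕ) (w : ℕ),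
    w ∈ dbfv (toDB Γ t) → w ∈ t.fv ∧ w ∉ Γ := by
  intro t
  induction t with
  | zero => intro Γ w h; simp [toDB, dbfv] at h
  | var u =>
      intro Γ w h
      simp only [toDB, encode] at h
      rcases hi : idx Γ u with _ | i <;> rw [hi] at h
      · simp [dbfv] at h
        subst h
        exact ⟨by simp [Exp.fv], idx_eq_none_iff.1 hi⟩
      · simp [dbfv] at h
  | act a e ih => intro Γ w h; exact ih Γ w h
  | plus e f ihe ihf =>
      intro Γ w h
      simp only [toDB, dbfv, Finset.mem_union] at h
      rcases h with h | h
      · rcases ihe Γ w h with ⟨h1, h2⟩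
        exact ⟨by simp [Exp.fv, h1], h2⟩
      · rcases ihf Γ w h with ⟨h1, h2⟩
        exact ⟨by simp [Exp.fv, h1], h2⟩
  | mu u e ih =>
      intro Γ w h
      rcases ih (u :: Γ) w h with ⟨h1, h2⟩
      have h3 : w ≠ u := fun hw => h2 (hw ▸ List.mem_cons_self)
      exact ⟨by simp [Exp.fv, Finset.mem_erase]; exact ⟨h3, h1⟩,
        fun hw => h2 (List.mem_cons_of_mem _ hw)⟩

end BDProof


namespace BDProof
variable {A : Type*}

def muS (σ : ℕ → Exp A) (v : ℕ) (e : Exp A) : Finset ℕ :=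
  ((Exp.fv e).erase v).biUnion fun w => Exp.fv (σ w)

def muV (σ : ℕ → Exp A) (v : ℕ) (e : Exp A) : ℕ :=
  if v ∈ muS σ v e then Exp.freshVar (muS σ v e) else v

theorem subst_mu (σ : ℕ → Exp A) (v : ℕ) (e : Exp A) :
    Exp.subst σ (.mu v e) =
      .mu (muV σ v e) (Exp.subst (Function.update σ v (.var (muV σ v e))) e) := by
  simp only [Exp.subst, muV, muS]
  rfl

theorem freshVar_not_mem (s : Finset ℕ) : Exp.freshVar s ∉ s := by
  intro h
  have h2 := Finset.le_sup (f := id) h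
  simp only [Exp.freshVar, id] at h2 ⊢
  omega

theorem muV_not_mem_muS (σ : ℕ → Exp A) (v : ℕ) (e : Exp A) : muV σ v e ∉ muS σ v e := by
  unfold muV
  split_ifs with h
  · exact freshVar_not_mem _
  · exact h

theorem muV_fresh {σ : ℕ → Exp A} {v : ℕ} {e : Exp A} {w : ℕ}
    (hw : w ∈ (Exp.fv e).erase v) : muV σ v e ∉ Exp.fv (σ w) := by
  intro hmem
  exact muV_not_mem_muS σ v e (Finset.mem_biUnion.2 ⟨w, hw, hmem⟩)

theorem fv_subst : ∀ (e : Exp A) (σ : ℕ → Exp A),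
    Exp.fv (Exp.subst σ e) = (Exp.fv e).biUnion fun w => Exp.fv (σ w) := by
  intro e
  induction e with
  | zero => intro σ; simp [Exp.subst, Exp.fv]
  | var v => intro σ; simp [Exp.subst, Exp.fv]
  | act a e ih => intro σ; simp only [Exp.subst, Exp.fv]; rw [ih]
  | plus e f ihe ihf =>
      intro σ
      simp only [Exp.subst, Exp.fv]
      rw [ihe, ihf]
      ext x
      simp only [Finset.mem_union, Finset.mem_biUnion]
      constructor
      · rintro (⟨w, hw, hx⟩ | ⟨w, hw, hx⟩)
        · exact ⟨w, Or.inl hw, hx⟩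
        · exact ⟨w, Or.inr hw, hx⟩
      · rintro ⟨w, hw | hw, hx⟩
        · exact Or.inl ⟨w, hw, hx⟩
        · exact Or.inr ⟨w, hw, hx⟩
  | mu v e ih =>
      intro σ
      rw [subst_mu]
      simp only [Exp.fv]
      rw [ih]
      ext x
      simp only [Finset.mem_erase, Finset.mem_biUnion]
      constructor
      · rintro ⟨hx, w, hw, hxw⟩
        by_cases hwv : w = v
        · subst hwv
          rw [Function.update_self] at hxw
          simp [Exp.fv] at hxw
          exact absurd hxw hx
        · rw [Function.update_of_ne hwv] at hxw
          exact ⟨w, ⟨hwv, hw⟩, hxw⟩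
      · rintro ⟨w, hw, hxw⟩
        refine ⟨fun hx => muV_fresh (σ := σ) (Finset.mem_erase.2 hw) (hx ▸ hxw),
          w, hw.2, ?_⟩
        rw [Function.update_of_ne hw.1]
        exact hxw

theorem subst_congr : ∀ (e : Exp A) (σ τ : ℕ → Exp A),
    (∀ w ∈ Exp.fv e, σ w = τ w) → Exp.subst σ e = Exp.subst τ e := by
  intro e
  induction e with
  | zero => intros; rfl
  | var v => intro σ τ h; exact h v (by simp [Exp.fv])
  | act a e ih =>
      intro σ τ h
      simp only [Exp.subst]
      rw [ih σ τ h]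
  | plus e f ihe ihf =>
      intro σ τ h
      simp only [Exp.subst]
      rw [ihe σ τ fun w hw => h w (by simp [Exp.fv, hw]),
        ihf σ τ fun w hw => h w (by simp [Exp.fv, hw])]
  | mu v e ih =>
      intro σ τ h
      rw [subst_mu, subst_mu]
      have hS : muS σ v e = muS τ v e := by
        unfold muS
        refine Finset.biUnion_congr rfl fun w hw => ?_
        rw [h w hw]
      have hV : muV σ v e = muV τ v e := by unfold muV; rw [hS]
      rw [hV]
      congr 1
      refine ih _ _ fun w hw => ?_
      by_cases hwv : w = v
      · subst hwv; rw [Function.update_self, Function.update_self]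
      · rw [Function.update_of_ne hwv, Function.update_of_ne hwv]
        exact h w (Finset.mem_erase.2 ⟨hwv, hw⟩)

theorem subst_var : ∀ e : Exp A, Exp.subst Exp.var e = e := by
  intro e
  induction e with
  | zero => rfl
  | var v => rfl
  | act a e ih => simp only [Exp.subst]; rw [ih]
  | plus e f ihe ihf => simp only [Exp.subst]; rw [ihe, ihf]
  | mu v e ih =>
      rw [subst_mu]
      have hS : muS Exp.var v e = (Exp.fv e).erase v := by
        unfold muS
        ext x
        simp [Exp.fv]
      have hV : muV Exp.var v e = v := by
        unfold muV
        rw [hS, if_neg (by simp)]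
      rw [hV]
      congr 1
      rw [subst_congr e _ Exp.var fun w hw => ?_, ih]
      by_cases hwv : w = v
      · subst hwv; rw [Function.update_self]
      · rw [Function.update_of_ne hwv]

theorem subst_single_notmem {v : ℕ} {M : Exp A} {t : Exp A} (h : v ∉ Exp.fv t) :
    Exp.subst (Function.update Exp.var v M) t = t := by
  rw [subst_congr t _ Exp.var fun w hw => ?_, subst_var]
  rw [Function.update_of_ne (fun hwv => h (by rw [← hwv]; exact hw))]

/-- MASTER commutation lemma: named substitution vs de Bruijn free-variable
substitution. -/
theorem master : ∀ (e : Exp A) (σ : ℕ → Exp A) (Γ Δ : List ℕ) (F : ℕ → DB A),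
    (∀ u, LClosed 0 (F u)) →
    (∀ w ∈ Exp.fv e, toDB Γ (σ w) = substFV F (encode A Δ w)) →
    toDB Γ (Exp.subst σ e) = substFV F (toDB Δ e) := by
  intro e
  induction e with
  | zero => intros; rfl
  | var v => intro σ Γ Δ F _ h; exact h v (by simp [Exp.fv])
  | act a e ih =>
      intro σ Γ Δ F hF h
      simp only [Exp.subst, toDB, substFV]
      rw [ih σ Γ Δ F hF h]
  | plus e f ihe ihf =>
      intro σ Γ Δ F hF h
      simp only [Exp.subst, toDB, substFV]
      rw [ihe σ Γ Δ F hF fun w hw => h w (by simp [Exp.fv, hw]),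
        ihf σ Γ Δ F hF fun w hw => h w (by simp [Exp.fv, hw])]
  | mu v e ih =>
      intro σ Γ Δ F hF h
      rw [subst_mu]
      simp only [toDB, substFV]
      congr 1
      refine ih _ (muV σ v e :: Γ) (v :: Δ) F hF fun w hw => ?_
      by_cases hwv : w = v
      · subst hwv
        rw [Function.update_self]
        simp only [toDB]
        rw [encode_self, encode_self]
        rfl
      · rw [Function.update_of_ne hwv]
        have hfr : muV σ v e ∉ Exp.fv (σ w) := muV_fresh (Finset.mem_erase.2 ⟨hwv, hw⟩)
        have h1 : toDB (muV σ v e :: Γ) (σ w) = dbLift 0 (toDB Γ (σ w)) := by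
          have := toDB_insert (σ w) [] Γ (muV σ v e) (Or.inr hfr)
          simpa using this
        rw [h1, h w (Finset.mem_erase.2 ⟨hwv, hw⟩),
          dbLift_substFV hF, encode_cons hwv]

/-- MASTER commutation lemma: named substitution vs de Bruijn index
instantiation. -/
theorem cs2g : ∀ (e : Exp A) (σ : ℕ → Exp A) (Γ Δ : List ℕ) (c : ℕ) (M : DB A),
    (∀ w ∈ Exp.fv e, toDB Γ (σ w) = dbInst c M (encode A Δ w)) →
    toDB Γ (Exp.subst σ e) = dbInst c M (toDB Δ e) := by
  intro e
  induction e with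
  | zero => intros; rfl
  | var v => intro σ Γ Δ c M h; exact h v (by simp [Exp.fv])
  | act a e ih =>
      intro σ Γ Δ c M h
      simp only [Exp.subst, toDB, dbInst]
      rw [ih σ Γ Δ c M h]
  | plus e f ihe ihf =>
      intro σ Γ Δ c M h
      simp only [Exp.subst, toDB, dbInst]
      rw [ihe σ Γ Δ c M fun w hw => h w (by simp [Exp.fv, hw]),
        ihf σ Γ Δ c M fun w hw => h w (by simp [Exp.fv, hw])]
  | mu v e ih =>
      intro σ Γ Δ c M h
      rw [subst_mu]
      simp only [toDB, dbInst]
      congr 1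
      refine ih _ (muV σ v e :: Γ) (v :: Δ) (c+1) (dbLift 0 M) fun w hw => ?_
      by_cases hwv : w = v
      · subst hwv
        rw [Function.update_self]
        simp only [toDB]
        rw [encode_self, encode_self]
        simp [dbInst]
      · rw [Function.update_of_ne hwv]
        have hfr : muV σ v e ∉ Exp.fv (σ w) := muV_fresh (Finset.mem_erase.2 ⟨hwv, hw⟩)
        have h1 : toDB (muV σ v e :: Γ) (σ w) = dbLift 0 (toDB Γ (σ w)) := by
          have := toDB_insert (σ w) [] Γ (muV σ v e) (Or.inr hfr)
          simpa using this
        rw [h1, h w (Finset.mem_erase.2 ⟨hwv, hw⟩),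
          dbLift_dbInst (Nat.zero_le c), encode_cons hwv]

end BDProof


namespace BDProof
variable {A : Type*}

theorem dbInst_dbLift (c : ℕ) (M : DB A) : ∀ t : DB A, dbInst c M (dbLift c t) = t := by
  intro t
  induction t generalizing c M with
  | zero => rfl
  | bvar i =>
      simp only [dbLift, dbInst]
      split_ifs <;> simp only [dbInst] <;> split_ifs <;>
        first | rfl | omega | (congr 1; omega)
  | fvar v => rfl
  | act a t ih => simp only [dbLift, dbInst]; rw [ih]
  | plus s t ihs iht => simp only [dbLift, dbInst]; rw [ihs, iht]
  | mu t ih => simp only [dbLift, dbInst]; rw [ih]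

theorem encode_lift_inj {u u' : ℕ} {Γe Γf : List ℕ}
    (h : dbLift 0 (encode A Γe u) = dbLift 0 (encode A Γf u')) :
    encode A Γe u = encode A Γf u' := by
  unfold encode at h ⊢
  rcases h1 : idx Γe u with _ | i <;> rcases h2 : idx Γf u' with _ | j <;>
    rw [h1, h2] at h <;> simp [dbLift] at h <;> simp [h]

/-- α-equivalence of named expressions. -/
def Aeq (e f : Exp A) : Prop := toDB [] e = toDB [] f

theorem aeq_refl (e : Exp A) : Aeq e e := rfl

theorem toDB_subst (σ : ℕ → Exp A) (e : Exp A) :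
    toDB [] (Exp.subst σ e) = substFV (fun w => toDB [] (σ w)) (toDB [] e) :=
  master e σ [] [] _ (fun u => lclosed_toDB (σ u) []) (fun _ _ => rfl)

theorem aeq_subst {e f : Exp A} (σ : ℕ → Exp A) (h : Aeq e f) :
    Aeq (Exp.subst σ e) (Exp.subst σ f) := by
  unfold Aeq at h ⊢
  rw [toDB_subst, toDB_subst, h]

theorem toDB_subst1 (Γ : List ℕ) (e' : Exp A) (v : ℕ) (M : Exp A) :
    toDB Γ (Exp.subst (Function.update Exp.var v M) e') =
      dbInst 0 (toDB Γ M) (toDB (v :: Γ) e') := by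
  refine cs2g e' _ Γ (v :: Γ) 0 (toDB Γ M) fun w _ => ?_
  by_cases hwv : w = v
  · subst hwv
    rw [Function.update_self, encode_self]
    simp [dbInst]
  · rw [Function.update_of_ne hwv, encode_cons hwv, dbInst_dbLift]
    rfl

/-- key α-equivalence: substituting the unfolding of a `μ` commutes with an
outer substitution. -/
theorem unfold_comp_aeq (σ : ℕ → Exp A) (v : ℕ) (e₀ e' : Exp A)
    (hsub : ∀ w ∈ Exp.fv e', w ≠ v → w ∈ (Exp.fv e₀).erase v) :
    Aeq (Exp.subst (Function.update Exp.var (muV σ v e₀) (Exp.subst σ (.mu v e₀)))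
          (Exp.subst (Function.update σ v (.var (muV σ v e₀))) e'))
        (Exp.subst σ (Exp.subst (Function.update Exp.var v (.mu v e₀)) e')) := by
  unfold Aeq
  rw [toDB_subst, toDB_subst, toDB_subst, toDB_subst, substFV_substFV, substFV_substFV]
  refine substFV_congr fun w hw => ?_
  have hwfv : w ∈ Exp.fv e' := (mem_dbfv_toDB e' [] w hw).1
  by_cases hwv : w = v
  · rw [hwv, Function.update_self, Function.update_self, ← toDB_subst, ← toDB_subst]
    have h1 : Exp.subst (Function.update Exp.var (muV σ v e₀) (Exp.subst σ (.mu v e₀)))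
        (Exp.var (muV σ v e₀)) = Exp.subst σ (.mu v e₀) := by
      show Function.update Exp.var (muV σ v e₀) (Exp.subst σ (.mu v e₀)) (muV σ v e₀) = _
      rw [Function.update_self]
    rw [h1]
  · rw [Function.update_of_ne hwv, Function.update_of_ne hwv, ← toDB_subst, ← toDB_subst]
    have hfr : muV σ v e₀ ∉ Exp.fv (σ w) := muV_fresh (hsub w hwfv hwv)
    rw [subst_single_notmem hfr]
    rfl

section DestLemmas
variable [DecidableEq A]

theorem mem_dest_mu_inr {v : ℕ} {e : Exp A} {w : ℕ} :
    Sum.inr w ∈ dest (Exp.mu v e) ↔ Sum.inr w ∈ dest e ∧ w ≠ v := by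
  simp only [dest, Finset.mem_biUnion]
  constructor
  · rintro ⟨x, hx, hmem⟩
    rcases x with ⟨a, e'⟩ | u
    · simp [destStep] at hmem
    · simp only [destStep] at hmem
      split_ifs at hmem with h
      · simp at hmem
      · simp at hmem
        subst hmem
        exact ⟨hx, h⟩
  · rintro ⟨hx, hw⟩
    exact ⟨Sum.inr w, hx, by simp [destStep, hw]⟩

theorem mem_dest_mu_inl {v : ℕ} {e : Exp A} {a : A} {x : Exp A} :
    Sum.inl (a, x) ∈ dest (Exp.mu v e) ↔
      ∃ e', Sum.inl (a, e') ∈ dest e ∧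
        x = Exp.subst (Function.update Exp.var v (Exp.mu v e)) e' := by
  simp only [dest, Finset.mem_biUnion]
  constructor
  · rintro ⟨y, hy, hmem⟩
    rcases y with ⟨b, e'⟩ | u
    · simp only [destStep, Finset.mem_singleton, Sum.inl.injEq, Prod.mk.injEq] at hmem
      refine ⟨e', by rw [hmem.1]; exact hy, ?_⟩
      rw [hmem.2]
      rfl
    · simp only [destStep] at hmem
      split_ifs at hmem <;> simp at hmem
  · rintro ⟨e', he', rfl⟩
    exact ⟨Sum.inl (a, e'), he', by simp [destStep, Exp.subst1]⟩

theorem fv_dest : ∀ e : Exp A,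
    (∀ a e', Sum.inl (a, e') ∈ dest e → Exp.fv e' ⊆ Exp.fv e) ∧
    (∀ u, Sum.inr u ∈ dest e → u ∈ Exp.fv e) := by
  intro e
  induction e with
  | zero => exact ⟨fun a e' h => by simp [dest] at h, fun u h => by simp [dest] at h⟩
  | var v =>
      refine ⟨fun a e' h => by simp [dest] at h, fun u h => ?_⟩
      simp [dest] at h
      simp [h, Exp.fv]
  | act a e ih =>
      refine ⟨fun b e' h => ?_, fun u h => by simp [dest] at h⟩
      simp only [dest, Finset.mem_singleton, Sum.inl.injEq, Prod.mk.injEq] at h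
      rw [h.2]
      exact Finset.Subset.refl _
  | plus e f ihe ihf =>
      constructor
      · intro a e' h
        simp only [dest, Finset.mem_union] at h
        rcases h with h | h
        · exact (ihe.1 a e' h).trans (by simp [Exp.fv])
        · exact (ihf.1 a e' h).trans (by simp [Exp.fv])
      · intro u h
        simp only [dest, Finset.mem_union] at h
        rcases h with h | h
        · exact Finset.mem_union_left _ (ihe.2 u h)
        · exact Finset.mem_union_right _ (ihf.2 u h)
  | mu v e ih =>
      constructor
      · intro a e' h
        rcases mem_dest_mu_inl.1 h with ⟨e₀', he₀', rfl⟩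
        intro x hx
        rw [fv_subst] at hx
        rcases Finset.mem_biUnion.1 hx with ⟨w, hw, hxw⟩
        by_cases hwv : w = v
        · subst hwv
          rw [Function.update_self] at hxw
          exact hxw
        · rw [Function.update_of_ne hwv] at hxw
          simp only [Exp.fv] at hxw
          rcases Finset.mem_singleton.1 hxw with rfl
          exact Finset.mem_erase.2 ⟨hwv, ih.1 a e₀' he₀' hw⟩
      · intro u h
        rcases mem_dest_mu_inr.1 h with ⟨h1, h2⟩
        exact Finset.mem_erase.2 ⟨h2, ih.2 u h1⟩

end DestLemmas
end BDProof


namespace BDProof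
variable {A : Type*}

theorem encode_cases (Γ : List ℕ) (w : ℕ) :
    (∃ i, encode A Γ w = .bvar i) ∨ encode A Γ w = .fvar w := by
  unfold encode
  rcases idx Γ w with _ | i
  · exact Or.inr rfl
  · exact Or.inl ⟨i, rfl⟩

theorem encode_cons_ne_bvar0 {Γ : List ℕ} {u v : ℕ} (h : u ≠ v) :
    encode A (v :: Γ) u ≠ .bvar 0 := by
  rw [encode_cons h]
  rcases encode_cases (A := A) Γ u with ⟨i, hi⟩ | hi <;> rw [hi] <;> simp [dbLift]

section DestLemmas
variable [DecidableEq A]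

theorem bisim_toDB : ∀ (e f : Exp A) (Γe Γf : List ℕ), toDB Γe e = toDB Γf f →
    (∀ u, Sum.inr u ∈ dest e →
      ∃ u', Sum.inr u' ∈ dest f ∧ encode A Γe u = encode A Γf u') ∧
    (∀ (a : A) (e' : Exp A), Sum.inl (a, e') ∈ dest e →
      ∃ f', Sum.inl (a, f') ∈ dest f ∧ toDB Γe e' = toDB Γf f') := by
  intro e
  induction e with
  | zero =>
      intro f Γe Γf h
      exact ⟨fun u hu => absurd hu (by simp [dest]),
        fun a e' he' => absurd he' (by simp [dest])⟩
  | var u =>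
      intro f Γe Γf h
      cases f with
      | var u' =>
          refine ⟨fun u'' hu'' => ?_, fun a e' he' => absurd he' (by simp [dest])⟩
          simp only [dest, Finset.mem_singleton, Sum.inr.injEq] at hu''
          subst hu''
          exact ⟨u', by simp [dest], h⟩
      | zero =>
          exfalso
          rcases encode_cases (A := A) Γe u with ⟨i, hi⟩ | hi <;>
            · simp only [toDB] at h; rw [hi] at h; exact (by cases h)
      | act b f₀ =>
          exfalso
          rcases encode_cases (A := A) Γe u with ⟨i, hi⟩ | hi <;>
            · simp only [toDB] at h; rw [hi] at h; exact (by cases h)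
      | plus f₁ f₂ =>
          exfalso
          rcases encode_cases (A := A) Γe u with ⟨i, hi⟩ | hi <;>
            · simp only [toDB] at h; rw [hi] at h; exact (by cases h)
      | mu w f₀ =>
          exfalso
          rcases encode_cases (A := A) Γe u with ⟨i, hi⟩ | hi <;>
            · simp only [toDB] at h; rw [hi] at h; exact (by cases h)
  | act a e₀ ih =>
      intro f Γe Γf h
      cases f with
      | act b f₀ =>
          simp only [toDB, DB.act.injEq] at h
          refine ⟨fun u hu => absurd hu (by simp [dest]), fun c e' he' => ?_⟩
          simp only [dest, Finset.mem_singleton, Sum.inl.injEq, Prod.mk.injEq] at he'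
          refine ⟨f₀, ?_, ?_⟩
          · simp only [dest, Finset.mem_singleton, Sum.inl.injEq, Prod.mk.injEq]
            exact ⟨he'.1.trans h.1, trivial⟩
          · rw [he'.2]; exact h.2
      | zero => exact absurd h (by simp only [toDB]; exact fun h => (by cases h))
      | var u' =>
          exfalso
          rcases encode_cases (A := A) Γf u' with ⟨i, hi⟩ | hi <;>
            · simp only [toDB] at h; rw [hi] at h; exact (by cases h)
      | plus f₁ f₂ => exact absurd h (by simp only [toDB]; exact fun h => (by cases h))
      | mu w f₀ => exact absurd h (by simp only [toDB]; exact fun h => (by cases h))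
  | plus e₁ e₂ ih₁ ih₂ =>
      intro f Γe Γf h
      cases f with
      | plus f₁ f₂ =>
          simp only [toDB, DB.plus.injEq] at h
          constructor
          · intro u hu
            simp only [dest, Finset.mem_union] at hu
            rcases hu with hu | hu
            · rcases (ih₁ f₁ Γe Γf h.1).1 u hu with ⟨u', hu', he⟩
              exact ⟨u', by simp only [dest, Finset.mem_union]; exact Or.inl hu', he⟩
            · rcases (ih₂ f₂ Γe Γf h.2).1 u hu with ⟨u', hu', he⟩
              exact ⟨u', by simp only [dest, Finset.mem_union]; exact Or.inr hu', he⟩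
          · intro a e' he'
            simp only [dest, Finset.mem_union] at he'
            rcases he' with he' | he'
            · rcases (ih₁ f₁ Γe Γf h.1).2 a e' he' with ⟨f', hf', he⟩
              exact ⟨f', by simp only [dest, Finset.mem_union]; exact Or.inl hf', he⟩
            · rcases (ih₂ f₂ Γe Γf h.2).2 a e' he' with ⟨f', hf', he⟩
              exact ⟨f', by simp only [dest, Finset.mem_union]; exact Or.inr hf', he⟩
      | zero => exact absurd h (by simp only [toDB]; exact fun h => (by cases h))
      | var u' =>
          exfalso
          rcases encode_cases (A := A) Γf u' with ⟨i, hi⟩ | hi <;>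
            · simp only [toDB] at h; rw [hi] at h; exact (by cases h)
      | act b f₀ => exact absurd h (by simp only [toDB]; exact fun h => (by cases h))
      | mu w f₀ => exact absurd h (by simp only [toDB]; exact fun h => (by cases h))
  | mu v e₀ ih =>
      intro f Γe Γf h
      cases f with
      | mu w f₀ =>
          have h' : toDB (v :: Γe) e₀ = toDB (w :: Γf) f₀ := by
            simpa only [toDB, DB.mu.injEq] using h
          constructor
          · intro u hu
            rcases mem_dest_mu_inr.1 hu with ⟨hu0, huv⟩
            rcases (ih f₀ (v :: Γe) (w :: Γf) h').1 u hu0 with ⟨u', hu', henc⟩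
            have hne : u' ≠ w := by
              intro hq
              subst hq
              rw [encode_self] at henc
              exact encode_cons_ne_bvar0 huv henc
            rw [encode_cons huv, encode_cons hne] at henc
            exact ⟨u', mem_dest_mu_inr.2 ⟨hu', hne⟩, encode_lift_inj henc⟩
          · intro a e' he'
            rcases mem_dest_mu_inl.1 he' with ⟨e₀', he₀', rfl⟩
            rcases (ih f₀ (v :: Γe) (w :: Γf) h').2 a e₀' he₀' with ⟨f₀', hf₀', heq⟩
            refine ⟨Exp.subst (Function.update Exp.var w (Exp.mu w f₀)) f₀',
              mem_dest_mu_inl.2 ⟨f₀', hf₀', rfl⟩, ?_⟩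
            rw [toDB_subst1, toDB_subst1, heq,
              show toDB Γe (Exp.mu v e₀) = toDB Γf (Exp.mu w f₀) from h]
      | zero => exact absurd h (by simp only [toDB]; exact fun h => (by cases h))
      | var u' =>
          exfalso
          rcases encode_cases (A := A) Γf u' with ⟨i, hi⟩ | hi <;>
            · simp only [toDB] at h; rw [hi] at h; exact (by cases h)
      | act b f₀ => exact absurd h (by simp only [toDB]; exact fun h => (by cases h))
      | plus f₁ f₂ => exact absurd h (by simp only [toDB]; exact fun h => (by cases h))

end DestLemmas
end BDProof


namespace BDProof
variable {A : Type*} [DecidableEq A]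

theorem dest_subst : ∀ (e : Exp A) (σ : ℕ → Exp A),
    (∀ w, Sum.inr w ∈ dest (Exp.subst σ e) ↔
      ∃ u, Sum.inr u ∈ dest e ∧ Sum.inr w ∈ dest (σ u)) ∧
    (∀ (a : A) (x : Exp A), Sum.inl (a, x) ∈ dest (Exp.subst σ e) →
      (∃ e', Sum.inl (a, e') ∈ dest e ∧ Aeq x (Exp.subst σ e')) ∨
      (∃ u, Sum.inr u ∈ dest e ∧ Sum.inl (a, x) ∈ dest (σ u))) ∧
    (∀ (a : A) (e' : Exp A), Sum.inl (a, e') ∈ dest e →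
      ∃ x, Sum.inl (a, x) ∈ dest (Exp.subst σ e) ∧ Aeq x (Exp.subst σ e')) ∧
    (∀ (a : A) (u : ℕ) (t : Exp A), Sum.inr u ∈ dest e → Sum.inl (a, t) ∈ dest (σ u) →
      Sum.inl (a, t) ∈ dest (Exp.subst σ e)) := by
  intro e
  induction e with
  | zero =>
      intro σ
      exact ⟨fun w => by simp [Exp.subst, dest],
        fun a x hx => absurd hx (by simp [Exp.subst, dest]),
        fun a e' he' => absurd he' (by simp [dest]),
        fun a u t hu _ => absurd hu (by simp [dest])⟩
  | var v =>
      intro σ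
      have hsv : Exp.subst σ (Exp.var v) = σ v := rfl
      refine ⟨fun w => ?_, fun a x hx => ?_, fun a e' he' => absurd he' (by simp [dest]),
        fun a u t hu ht => ?_⟩
      · rw [hsv]
        constructor
        · intro hw; exact ⟨v, by simp [dest], hw⟩
        · rintro ⟨u, hu, hw⟩
          simp only [dest, Finset.mem_singleton, Sum.inr.injEq] at hu
          rwa [← hu]
      · rw [hsv] at hx
        exact Or.inr ⟨v, by simp [dest], hx⟩
      · simp only [dest, Finset.mem_singleton, Sum.inr.injEq] at hu
        rw [hu] at ht
        rw [hsv]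
        exact ht
  | act a e₀ ih =>
      intro σ
      have hsv : Exp.subst σ (Exp.act a e₀) = Exp.act a (Exp.subst σ e₀) := rfl
      refine ⟨fun w => ?_, fun b x hx => ?_, fun b e' he' => ?_,
        fun b u t hu _ => absurd hu (by simp [dest])⟩
      · rw [hsv]
        simp [dest]
      · rw [hsv] at hx
        simp only [dest, Finset.mem_singleton, Sum.inl.injEq, Prod.mk.injEq] at hx
        refine Or.inl ⟨e₀, ?_, ?_⟩
        · simp only [dest, Finset.mem_singleton, Sum.inl.injEq, Prod.mk.injEq]
          exact ⟨hx.1, trivial⟩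
        · rw [hx.2]; exact aeq_refl _
      · simp only [dest, Finset.mem_singleton, Sum.inl.injEq, Prod.mk.injEq] at he'
        refine ⟨Exp.subst σ e₀, ?_, ?_⟩
        · rw [hsv]
          simp only [dest, Finset.mem_singleton, Sum.inl.injEq, Prod.mk.injEq]
          exact ⟨he'.1, trivial⟩
        · rw [he'.2]; exact aeq_refl _
  | plus e₁ e₂ ih₁ ih₂ =>
      intro σ
      have hsv : Exp.subst σ (Exp.plus e₁ e₂) = Exp.plus (Exp.subst σ e₁) (Exp.subst σ e₂) := rfl
      have hdu : ∀ g₁ g₂ : Exp A, dest (Exp.plus g₁ g₂) = dest g₁ ∪ dest g₂ := fun _ _ => rfl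
      refine ⟨fun w => ?_, fun a x hx => ?_, fun a e' he' => ?_, fun a u t hu ht => ?_⟩
      · rw [hsv, hdu]
        simp only [Finset.mem_union, (ih₁ σ).1, (ih₂ σ).1, hdu]
        constructor
        · rintro (⟨u, hu, hw⟩ | ⟨u, hu, hw⟩)
          · exact ⟨u, Or.inl hu, hw⟩
          · exact ⟨u, Or.inr hu, hw⟩
        · rintro ⟨u, hu | hu, hw⟩
          · exact Or.inl ⟨u, hu, hw⟩
          · exact Or.inr ⟨u, hu, hw⟩
      · rw [hsv, hdu] at hx
        rcases Finset.mem_union.1 hx with hx | hx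
        · rcases (ih₁ σ).2.1 a x hx with ⟨e', he', ha⟩ | ⟨u, hu, ht⟩
          · exact Or.inl ⟨e', by rw [hdu]; exact Finset.mem_union_left _ he', ha⟩
          · exact Or.inr ⟨u, by rw [hdu]; exact Finset.mem_union_left _ hu, ht⟩
        · rcases (ih₂ σ).2.1 a x hx with ⟨e', he', ha⟩ | ⟨u, hu, ht⟩
          · exact Or.inl ⟨e', by rw [hdu]; exact Finset.mem_union_right _ he', ha⟩
          · exact Or.inr ⟨u, by rw [hdu]; exact Finset.mem_union_right _ hu, ht⟩
      · rw [hdu] at he'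
        rcases Finset.mem_union.1 he' with he' | he'
        · rcases (ih₁ σ).2.2.1 a e' he' with ⟨x, hx, ha⟩
          exact ⟨x, by rw [hsv, hdu]; exact Finset.mem_union_left _ hx, ha⟩
        · rcases (ih₂ σ).2.2.1 a e' he' with ⟨x, hx, ha⟩
          exact ⟨x, by rw [hsv, hdu]; exact Finset.mem_union_right _ hx, ha⟩
      · rw [hdu] at hu
        rw [hsv, hdu]
        rcases Finset.mem_union.1 hu with hu | hu
        · exact Finset.mem_union_left _ ((ih₁ σ).2.2.2 a u t hu ht)
        · exact Finset.mem_union_right _ ((ih₂ σ).2.2.2 a u t hu ht)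
  | mu v e₀ ih =>
      intro σ
      set v' := muV σ v e₀ with hv'
      set σ' := Function.update σ v (Exp.var v') with hσ'
      have hsm : Exp.subst σ (Exp.mu v e₀) = Exp.mu v' (Exp.subst σ' e₀) := subst_mu σ v e₀
      -- the unfolded body of the substituted μ equals the substituted μ itself
      have hM : Exp.mu v' (Exp.subst σ' e₀) = Exp.subst σ (Exp.mu v e₀) := hsm.symm
      have key_aeq : ∀ e₀' : Exp A, (∀ w ∈ Exp.fv e₀', w ≠ v → w ∈ (Exp.fv e₀).erase v) →
          ∀ x₀ : Exp A, Aeq x₀ (Exp.subst σ' e₀') →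
          Aeq (Exp.subst (Function.update Exp.var v' (Exp.mu v' (Exp.subst σ' e₀))) x₀)
            (Exp.subst σ (Exp.subst (Function.update Exp.var v (Exp.mu v e₀)) e₀')) := by
        intro e₀' hsub x₀ hx₀
        have a1 : Aeq (Exp.subst (Function.update Exp.var v' (Exp.mu v' (Exp.subst σ' e₀))) x₀)
            (Exp.subst (Function.update Exp.var v' (Exp.mu v' (Exp.subst σ' e₀)))
              (Exp.subst σ' e₀')) := aeq_subst _ hx₀
        have a2 := unfold_comp_aeq σ v e₀ e₀' hsub
        rw [← hv'] at a2
        rw [hsm] at a2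
        exact a1.trans a2
      refine ⟨fun w => ?_, fun a x hx => ?_, fun a e' he' => ?_, fun a u t hu ht => ?_⟩
      · rw [hsm, mem_dest_mu_inr, (ih σ').1]
        constructor
        · rintro ⟨⟨u, hu, hw⟩, hwv'⟩
          by_cases huv : u = v
          · exfalso
            rw [huv, hσ', Function.update_self] at hw
            simp only [dest, Finset.mem_singleton, Sum.inr.injEq] at hw
            exact hwv' hw
          · refine ⟨u, mem_dest_mu_inr.2 ⟨hu, huv⟩, ?_⟩
            rwa [hσ', Function.update_of_ne huv] at hw
        · rintro ⟨u, hu, hw⟩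
          rcases mem_dest_mu_inr.1 hu with ⟨hu0, hunv⟩
          have huerase : u ∈ (Exp.fv e₀).erase v :=
            Finset.mem_erase.2 ⟨hunv, (fv_dest e₀).2 u hu0⟩
          have hwfv : w ∈ Exp.fv (σ u) := (fv_dest (σ u)).2 w hw
          refine ⟨⟨u, hu0, by rw [hσ', Function.update_of_ne hunv]; exact hw⟩, ?_⟩
          intro hq
          exact muV_fresh huerase (hq ▸ hwfv)
      · rw [hsm] at hx
        rcases mem_dest_mu_inl.1 hx with ⟨x₀, hx₀, rfl⟩
        rcases (ih σ').2.1 a x₀ hx₀ with ⟨e₀', he₀', ha⟩ | ⟨u, hu, hx₀u⟩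
        · refine Or.inl ⟨Exp.subst (Function.update Exp.var v (Exp.mu v e₀)) e₀',
            mem_dest_mu_inl.2 ⟨e₀', he₀', rfl⟩, ?_⟩
          refine key_aeq e₀' (fun w hw hwv => ?_) x₀ ha
          exact Finset.mem_erase.2 ⟨hwv, ((fv_dest e₀).1 a e₀' he₀') hw⟩
        · by_cases huv : u = v
          · exfalso
            rw [huv, hσ', Function.update_self] at hx₀u
            simp [dest] at hx₀u
          · rw [hσ', Function.update_of_ne huv] at hx₀u
            have hfr : v' ∉ Exp.fv x₀ := by
              intro hq
              have huerase : u ∈ (Exp.fv e₀).erase v :=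
                Finset.mem_erase.2 ⟨huv, (fv_dest e₀).2 u hu⟩
              exact muV_fresh huerase (((fv_dest (σ u)).1 a x₀ hx₀u) hq)
            rw [subst_single_notmem hfr]
            exact Or.inr ⟨u, mem_dest_mu_inr.2 ⟨hu, huv⟩, hx₀u⟩
      · rcases mem_dest_mu_inl.1 he' with ⟨e₀', he₀', rfl⟩
        rcases (ih σ').2.2.1 a e₀' he₀' with ⟨x₀, hx₀, ha⟩
        refine ⟨Exp.subst (Function.update Exp.var v' (Exp.mu v' (Exp.subst σ' e₀))) x₀,
          by rw [hsm]; exact mem_dest_mu_inl.2 ⟨x₀, hx₀, rfl⟩, ?_⟩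
        refine key_aeq e₀' (fun w hw hwv => ?_) x₀ ha
        exact Finset.mem_erase.2 ⟨hwv, ((fv_dest e₀).1 a e₀' he₀') hw⟩
      · rcases mem_dest_mu_inr.1 hu with ⟨hu0, hunv⟩
        have ht' : Sum.inl (a, t) ∈ dest (σ' u) := by
          rw [hσ', Function.update_of_ne hunv]; exact ht
        have hmem := (ih σ').2.2.2 a u t hu0 ht'
        have hfr : v' ∉ Exp.fv t := by
          intro hq
          have huerase : u ∈ (Exp.fv e₀).erase v :=
            Finset.mem_erase.2 ⟨hunv, (fv_dest e₀).2 u hu0⟩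
          exact muV_fresh huerase (((fv_dest (σ u)).1 a t ht) hq)
        rw [hsm]
        refine mem_dest_mu_inl.2 ⟨t, hmem, ?_⟩
        rw [subst_single_notmem hfr]

end BDProof


namespace BDProof
variable {A : Type*}

theorem le_hSup {Y : Type*} {s : Finset Y} {f : Y → ℝ} {x : Y} (hx : x ∈ s) :
    f x ≤ hSup s f := by
  unfold hSup
  rw [dif_pos ⟨x, hx⟩]
  exact Finset.le_sup' f hx

theorem hSup_le {Y : Type*} {s : Finset Y} {f : Y → ℝ} {c : ℝ} (hc : 0 ≤ c)
    (h : ∀ x ∈ s, f x ≤ c) : hSup s f ≤ c := by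
  unfold hSup
  split_ifs with hs
  · exact Finset.sup'_le hs f h
  · exact hc

theorem hInf_le {Y : Type*} {t : Finset Y} {f : Y → ℝ} {y : Y} (hy : y ∈ t) :
    hInf t f ≤ f y := by
  unfold hInf
  rw [dif_pos ⟨y, hy⟩]
  exact Finset.inf'_le f hy

theorem hInf_attained {Y : Type*} {t : Finset Y} (ht : t.Nonempty) (f : Y → ℝ) :
    ∃ y ∈ t, hInf t f = f y := by
  rcases Finset.exists_mem_eq_inf' ht f with ⟨y, hy, h⟩
  exact ⟨y, hy, by unfold hInf; rw [dif_pos ht]; exact h⟩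

theorem hausdorff_le {X : Type*} {d : X → X → ℝ} {s t : Finset X} {c : ℝ} (hc : 0 ≤ c)
    (h1 : ∀ x ∈ s, ∃ y ∈ t, d x y ≤ c) (h2 : ∀ y ∈ t, ∃ x ∈ s, d y x ≤ c) :
    hausdorffDist d s t ≤ c := by
  unfold hausdorffDist
  refine max_le (hSup_le hc fun x hx => ?_) (hSup_le hc fun y hy => ?_)
  · rcases h1 x hx with ⟨y, hy, hxy⟩
    exact le_trans (hInf_le hy) hxy
  · rcases h2 y hy with ⟨x, hx, hyx⟩
    exact le_trans (hInf_le hx) hyx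

section Analysis
variable [DecidableEq A] {bd : Exp A → Exp A → ℝ}

theorem phi_pt (hfix : Phi dest bd = bd) (e f : Exp A) :
    hausdorffDist (distLift bd) (dest e) (dest f) = bd e f := by
  conv_rhs => rw [← hfix]
  rfl

/-- extraction of matching successors from the fixpoint equation. -/
theorem extr (hm : IsBPMet bd) (hfix : Phi dest bd = bd) {e f : Exp A} {C : ℝ}
    (hC : bd e f ≤ C) (hC1 : C < 1) :
    (∀ u, Sum.inr u ∈ dest e → Sum.inr u ∈ dest f) ∧
    (∀ (a : A) (x₀ : Exp A), Sum.inl (a, x₀) ∈ dest e →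
      ∃ y₀, Sum.inl (a, y₀) ∈ dest f ∧ bd x₀ y₀ ≤ 2 * C) := by
  have hPhi : hausdorffDist (distLift bd) (dest e) (dest f) ≤ C := by
    rw [phi_pt hfix]; exact hC
  have hPhi' : max (hSup (dest e) fun x => hInf (dest f) fun y => distLift bd x y)
      (hSup (dest f) fun y => hInf (dest e) fun x => distLift bd y x) ≤ C := hPhi
  have hcomp : ∀ x ∈ dest e, hInf (dest f) (fun y => distLift bd x y) ≤ C := by
    intro x hx
    have h1 := le_hSup (f := fun x => hInf (dest f) fun y => distLift bd x y) hx
    exact le_trans h1 (le_trans (le_max_left _ _) hPhi')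
  have hne : ∀ x ∈ dest e, (dest f).Nonempty := by
    intro x hx
    by_contra hemp
    rw [Finset.not_nonempty_iff_eq_empty] at hemp
    have h2 := hcomp x hx
    rw [hemp] at h2
    unfold hInf at h2
    rw [dif_neg (by simp)] at h2
    linarith
  constructor
  · intro u hu
    rcases hInf_attained (hne _ hu) (fun y => distLift bd (Sum.inr u) y) with ⟨y, hy, hinf⟩
    have hle : distLift bd (Sum.inr u) y ≤ C := hinf ▸ hcomp _ hu
    rcases y with ⟨b, y₀⟩ | w
    · exfalso
      simp [distLift] at hle
      linarith
    · by_cases hw : u = w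
      · rwa [← hw] at hy
      · exfalso
        simp [distLift, hw] at hle
        linarith
  · intro a x₀ hx
    rcases hInf_attained (hne _ hx) (fun y => distLift (V := ℕ) bd (Sum.inl (a, x₀)) y) with ⟨y, hy, hinf⟩
    have hle : distLift (V := ℕ) bd (Sum.inl (a, x₀)) y ≤ C := hinf ▸ hcomp _ hx
    rcases y with ⟨b, y₀⟩ | w
    · by_cases hab : a = b
      · subst hab
        simp [distLift] at hle
        exact ⟨y₀, hy, by linarith⟩
      · exfalso
        simp [distLift, hab] at hle
        linarith
    · exfalso
      simp [distLift] at hle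
      linarith

theorem le_of_forall_le_add_pow {x C : ℝ} (h : ∀ n : ℕ, x ≤ C + (1/2 : ℝ)^n) : x ≤ C := by
  refine le_of_forall_pos_le_add fun ε hε => ?_
  obtain ⟨n, hn⟩ := exists_pow_lt_of_lt_one hε (by norm_num : (1/2 : ℝ) < 1)
  exact (h n).trans (by linarith)

theorem aeq_bd (hm : IsBPMet bd) (hfix : Phi dest bd = bd) :
    ∀ (n : ℕ) (e f : Exp A), Aeq e f → bd e f ≤ (1/2 : ℝ)^n := by
  intro n
  induction n with
  | zero => intro e f _; simpa using hm.le_one e f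
  | succ n ihn =>
      intro e f h
      rw [← phi_pt hfix]
      have hpow : (0:ℝ) ≤ (1/2 : ℝ)^(n+1) := by positivity
      refine hausdorff_le hpow ?_ ?_
      · intro x hx
        rcases x with ⟨a, x₀⟩ | u
        · rcases (bisim_toDB e f [] [] h).2 a x₀ hx with ⟨f', hf', heq⟩
          refine ⟨Sum.inl (a, f'), hf', ?_⟩
          have hd : distLift (V := ℕ) bd (Sum.inl (a, x₀)) (Sum.inl (a, f')) = (1/2) * bd x₀ f' := by simp [distLift]
          rw [hd, pow_succ]
          have := ihn x₀ f' heq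
          linarith
        · rcases (bisim_toDB e f [] [] h).1 u hx with ⟨u', hu', henc⟩
          have : u = u' := by
            have h1 : encode A [] u = DB.fvar u := rfl
            have h2 : encode A [] u' = DB.fvar u' := rfl
            rw [h1, h2] at henc
            exact DB.fvar.inj henc
          subst this
          refine ⟨Sum.inr u, hu', ?_⟩
          have hd : distLift (A := A) (V := ℕ) bd (Sum.inr u) (Sum.inr u) = 0 := by
            simp [distLift]
          rw [hd]; exact hpow
      · intro y hy
        rcases y with ⟨a, y₀⟩ | u
        · rcases (bisim_toDB f e [] [] h.symm).2 a y₀ hy with ⟨e', he', heq⟩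
          refine ⟨Sum.inl (a, e'), he', ?_⟩
          have hd : distLift (V := ℕ) bd (Sum.inl (a, y₀)) (Sum.inl (a, e')) = (1/2) * bd y₀ e' := by simp [distLift]
          rw [hd, pow_succ]
          have := ihn y₀ e' heq
          linarith
        · rcases (bisim_toDB f e [] [] h.symm).1 u hy with ⟨u', hu', henc⟩
          have : u = u' := by
            have h1 : encode A [] u = DB.fvar u := rfl
            have h2 : encode A [] u' = DB.fvar u' := rfl
            rw [h1, h2] at henc
            exact DB.fvar.inj henc
          subst this
          refine ⟨Sum.inr u, hu', ?_⟩
          have hd : distLift (A := A) (V := ℕ) bd (Sum.inr u) (Sum.inr u) = 0 := by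
            simp [distLift]
          rw [hd]; exact hpow

theorem bd_aeq (hm : IsBPMet bd) (hfix : Phi dest bd = bd) {e f : Exp A} (h : Aeq e f) :
    bd e f = 0 := by
  refine le_antisymm ?_ (hm.nonneg e f)
  refine le_of_forall_le_add_pow fun n => ?_
  rw [zero_add]
  exact aeq_bd hm hfix n e f h

/-- the one-sided matching step for the main induction. -/
theorem oneside (hm : IsBPMet bd) (hfix : Phi dest bd = bd)
    (σ τ : ℕ → Exp A) (n : ℕ) (C G : ℝ)
    (hC0 : 0 ≤ C) (hC1 : C < 1) (hGC : G ≤ C)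
    (hG : ∀ w, bd (σ w) (τ w) ≤ G)
    (hIH : ∀ e' f', bd (Exp.subst σ e') (Exp.subst τ f') ≤ max (bd e' f') G + (1/2 : ℝ)^n)
    (e f : Exp A) (hef : bd e f ≤ C) :
    ∀ x ∈ dest (Exp.subst σ e), ∃ y ∈ dest (Exp.subst τ f),
      distLift bd x y ≤ C + (1/2 : ℝ)^(n+1) := by
  have hpow : (0:ℝ) < (1/2 : ℝ)^(n+1) := by positivity
  have hG0 : 0 ≤ G := le_trans (hm.nonneg _ _) (hG 0)
  intro x hx
  rcases x with ⟨a, x₀⟩ | w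
  · rcases (dest_subst e σ).2.1 a x₀ hx with ⟨e', he', hax⟩ | ⟨u, hu, hx₀u⟩
    · rcases (extr hm hfix hef hC1).2 a e' he' with ⟨f', hf', hbd'⟩
      rcases (dest_subst f τ).2.2.1 a f' hf' with ⟨y₀, hy₀, hay⟩
      refine ⟨Sum.inl (a, y₀), hy₀, ?_⟩
      have hd : distLift (V := ℕ) bd (Sum.inl (a, x₀)) (Sum.inl (a, y₀)) = (1/2) * bd x₀ y₀ := by simp [distLift]
      rw [hd]
      have t1 : bd x₀ (Exp.subst σ e') = 0 := bd_aeq hm hfix hax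
      have t3 : bd (Exp.subst τ f') y₀ = 0 := by
        rw [hm.symm]; exact bd_aeq hm hfix hay
      have t2 : bd (Exp.subst σ e') (Exp.subst τ f') ≤ max (bd e' f') G + (1/2 : ℝ)^n :=
        hIH e' f'
      have tri : bd x₀ y₀ ≤ bd x₀ (Exp.subst σ e') + bd (Exp.subst σ e') (Exp.subst τ f')
          + bd (Exp.subst τ f') y₀ := by
        calc bd x₀ y₀ ≤ bd x₀ (Exp.subst τ f') + bd (Exp.subst τ f') y₀ := hm.triangle _ _ _
        _ ≤ (bd x₀ (Exp.subst σ e') + bd (Exp.subst σ e') (Exp.subst τ f'))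
            + bd (Exp.subst τ f') y₀ := by
              have := hm.triangle x₀ (Exp.subst σ e') (Exp.subst τ f')
              linarith
      have hmax : max (bd e' f') G ≤ 2 * C := by
        refine max_le ?_ (by linarith)
        linarith
      have hxy : bd x₀ y₀ ≤ 2 * C + (1/2 : ℝ)^n := by
        rw [t1, t3] at tri
        simp only [zero_add, add_zero] at tri
        linarith
      have : (1/2) * bd x₀ y₀ ≤ C + (1/2 : ℝ)^(n+1) := by
        rw [pow_succ]
        linarith
      exact this
    · have hGlt1 : bd (σ u) (τ u) < 1 := lt_of_le_of_lt (le_trans (hG u) hGC) hC1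
      rcases (extr hm hfix (le_refl (bd (σ u) (τ u))) hGlt1).2 a x₀ hx₀u with ⟨y₀, hy₀, hbd'⟩
      have hinrf : Sum.inr u ∈ dest f := (extr hm hfix hef hC1).1 u hu
      refine ⟨Sum.inl (a, y₀), (dest_subst f τ).2.2.2 a u y₀ hinrf hy₀, ?_⟩
      have hd : distLift (V := ℕ) bd (Sum.inl (a, x₀)) (Sum.inl (a, y₀)) = (1/2) * bd x₀ y₀ := by simp [distLift]
      rw [hd]
      have := hG u
      linarith
  · rcases (dest_subst e σ).1 w |>.1 hx with ⟨u, hu, hw⟩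
    have hinrf : Sum.inr u ∈ dest f := (extr hm hfix hef hC1).1 u hu
    have hGlt1 : bd (σ u) (τ u) < 1 := lt_of_le_of_lt (le_trans (hG u) hGC) hC1
    have hwτ : Sum.inr w ∈ dest (τ u) :=
      (extr hm hfix (le_refl (bd (σ u) (τ u))) hGlt1).1 w hw
    refine ⟨Sum.inr w, (dest_subst f τ).1 w |>.2 ⟨u, hinrf, hwτ⟩, ?_⟩
    have hd : distLift (A := A) (V := ℕ) bd (Sum.inr w) (Sum.inr w) = 0 := by
      simp [distLift]
    rw [hd]
    linarith

end Analysis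
end BDProof


namespace BDProof
variable {A : Type*} [DecidableEq A] {bd : Exp A → Exp A → ℝ}

theorem bsubst (hm : IsBPMet bd) (hfix : Phi dest bd = bd) (σ τ : ℕ → Exp A) :
    ∀ (n : ℕ) (e f : Exp A),
      bd (Exp.subst σ e) (Exp.subst τ f) ≤
        max (bd e f) (⨆ w : ℕ, bd (σ w) (τ w)) + (1/2 : ℝ)^n := by
  have hbdd : BddAbove (Set.range fun w => bd (σ w) (τ w)) :=
    ⟨1, by rintro _ ⟨w, rfl⟩; exact hm.le_one _ _⟩
  set G := ⨆ w : ℕ, bd (σ w) (τ w) with hGdef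
  have hG : ∀ w, bd (σ w) (τ w) ≤ G := fun w => le_ciSup hbdd w
  have hG0 : 0 ≤ G := le_trans (hm.nonneg _ _) (hG 0)
  have hGsym : ∀ w, bd (τ w) (σ w) ≤ G := fun w => by rw [hm.symm]; exact hG w
  intro n
  induction n with
  | zero =>
      intro e f
      have h1 := hm.le_one (Exp.subst σ e) (Exp.subst τ f)
      have h0 : 0 ≤ max (bd e f) G := le_trans (hm.nonneg e f) (le_max_left _ _)
      simp only [pow_zero]
      linarith
  | succ n ihn =>
      intro e f
      set C := max (bd e f) G with hCdef
      have hC0 : 0 ≤ C := le_trans (hm.nonneg e f) (le_max_left _ _)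
      have hpow : (0:ℝ) < (1/2 : ℝ)^(n+1) := by positivity
      by_cases h1 : C + (1/2 : ℝ)^(n+1) < 1
      · have hC1 : C < 1 := by linarith
        rw [← phi_pt hfix]
        refine hausdorff_le (by linarith) ?_ ?_
        · exact oneside hm hfix σ τ n C G hC0 hC1 (le_max_right _ _) hG
            (fun e' f' => ihn e' f') e f (le_max_left _ _)
        · refine oneside hm hfix τ σ n C G hC0 hC1 (le_max_right _ _) hGsym
            (fun e' f' => ?_) f e (by rw [hm.symm]; exact le_max_left _ _)
          rw [hm.symm]
          have h2 := ihn f' e'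
          rwa [hm.symm f' e'] at h2
      · exact le_trans (hm.le_one _ _) (not_lt.1 h1)

end BDProof


/-- substitution is nonexpansive for the behavioural distance `bd`
(the least fixpoint of `Φ` for the prechart of Milner expressions). `σg` and `σh`
are the simultaneous substitutions `[(g₁, …, g_m)/(v_{i₁}, …, v_{i_m})]` and
`[(h₁, …, h_m)/(v_{i₁}, …, v_{i_m})]`, characterised by their action on the distinct
variables `vs` and by being the identity elsewhere. -/
theorem bd_subst_nonexpansive {A : Type*} [DecidableEq A] {m : ℕ}
    (e f : Exp A) (gs hs : Fin m → Exp A) (vs : Fin m → ℕ)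
    (hvs : Function.Injective vs)
    (σg σh : ℕ → Exp A)
    (hσg : ∀ j, σg (vs j) = gs j) (hσg' : ∀ w, w ∉ Set.range vs → σg w = .var w)
    (hσh : ∀ j, σh (vs j) = hs j) (hσh' : ∀ w, w ∉ Set.range vs → σh w = .var w)
    (bd : Exp A → Exp A → ℝ) (hbd : IsLfpDist dest bd) :
    bd (Exp.subst σg e) (Exp.subst σh f) ≤
      max (bd e f) (⨆ j : Fin m, bd (gs j) (hs j)) := by
  obtain ⟨hm, hfix, -⟩ := hbd
  have key : ∀ n : ℕ, bd (Exp.subst σg e) (Exp.subst σh f) ≤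
      max (bd e f) (⨆ w : ℕ, bd (σg w) (σh w)) + (1/2 : ℝ)^n :=
    fun n => BDProof.bsubst hm hfix σg σh n e f
  have h1 := BDProof.le_of_forall_le_add_pow key
  refine h1.trans (max_le (le_max_left _ _) ?_)
  have hbdd : BddAbove (Set.range fun j : Fin m => bd (gs j) (hs j)) :=
    ⟨1, by rintro _ ⟨j, rfl⟩; exact hm.le_one _ _⟩
  refine ciSup_le fun w => ?_
  by_cases hw : w ∈ Set.range vs
  · obtain ⟨j, rfl⟩ := hw
    rw [hσg j, hσh j]
    exact le_trans (le_ciSup hbdd j) (le_max_right _ _)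
  · rw [hσg' w hw, hσh' w hw, hm.refl]
    exact le_trans (hm.nonneg e f) (le_max_left _ _)
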